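/- arXiv:1509.07462 — 3 statements merged into one kernel-verified Lean document; each statement's English description precedes it below -/
import Mathlib

section
/- Let H be an atomic cancellative monoid whose set of distances Δ(H) is nonempty. Then min Δ(H) = gcd Δ(H), i.e., the greatest common divisor of all elements of Δ(H) is itself an element of Δ(H) and equals its minimum. -/
open scoped Classical ENNReal

/-- The set of lengths of `a`: all `k` such that `a` is a product of `k` irreducibles,
with the convention `L(a) = {0}` for units. -/
noncomputable def lengths {M : Type*} [Monoid M] (a : M) : Set ℕ :=
  if IsUnit a then {0}
  else {k | ∃ l : List M, l.length = k ∧ (∀ x ∈ l, Irreducible x) ∧ l.prod = a}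

/-- A monoid is atomic if every nonunit is a finite product of irreducibles (atoms). -/
def Atomic (M : Type*) [Monoid M] : Prop :=
  ∀ a : M, ¬IsUnit a → ∃ l : List M, (∀ x ∈ l, Irreducible x) ∧ l.prod = a

/-- The set of distances of a set `L ⊆ ℕ`. -/
def distances (L : Set ℕ) : Set ℕ :=
  {d | 0 < d ∧ ∃ k ∈ L, k + d ∈ L ∧ ∀ m ∈ L, k ≤ m → m ≤ k + d → m = k ∨ m = k + d}

/-- The set of distances `Δ(H)` of a monoid. -/
def DeltaH (M : Type*) [Monoid M] : Set ℕ :=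
  ⋃ a : M, distances (lengths a)

/-- The union `U_k(H)` of all sets of lengths containing `k`. -/
def lengthUnion (M : Type*) [Monoid M] (k : ℕ) : Set ℕ :=
  {ℓ | ∃ l1 l2 : List M, l1.length = k ∧ l2.length = ℓ ∧
      (∀ x ∈ l1, Irreducible x) ∧ (∀ x ∈ l2, Irreducible x) ∧ l1.prod = l2.prod}

/-- The `k`-th elasticity `ρ_k(H) = sup U_k(H)`, valued in `ℝ≥0∞`. -/
noncomputable def rhoK (M : Type*) [Monoid M] (k : ℕ) : ℝ≥0∞ :=
  ⨆ ℓ ∈ lengthUnion M k, (ℓ : ℝ≥0∞)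

/-- `λ_k(H) = min U_k(H)`. -/
noncomputable def lamK (M : Type*) [Monoid M] (k : ℕ) : ℕ :=
  sInf (lengthUnion M k)

/-- The elasticity `ρ(L) = sup L / min L` of a set of lengths, with `ρ({0}) = 1`. -/
noncomputable def setElasticity (L : Set ℕ) : ℝ≥0∞ :=
  if L = {0} then 1 else (⨆ n ∈ L, (n : ℝ≥0∞)) / ((sInf L : ℕ) : ℝ≥0∞)

/-- The elasticity `ρ(H) = sup { ρ(L(a)) : a ∈ H }`. -/
noncomputable def elasticity (M : Type*) [Monoid M] : ℝ≥0∞ :=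
  ⨆ a : M, setElasticity (lengths a)

/-- The principal left ideal `Ha`. -/
def leftIdeal {M : Type*} [Monoid M] (a : M) : Set M := Set.range (· * a)

/-- The principal right ideal `aH`. -/
def rightIdeal {M : Type*} [Monoid M] (a : M) : Set M := Set.range (a * ·)

/-- `A` is a generating set of the monoid `M`. -/
def Generates {M : Type*} [Monoid M] (A : Set M) : Prop :=
  ∀ a : M, ∃ l : List M, (∀ x ∈ l, x ∈ A) ∧ l.prod = a

/-! Let `d₁ = min Δ(H)` be realised by lengths `k, k + d₁ ∈ L(u)` and let `d ∈ Δ(H)` be realised by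
`l, l + d ∈ L(v)`. For `q = ⌊d / d₁⌋`, the element `u ^ q * v` has the lengths `q (k + d₁) + l` and
`q k + l + d`, which differ by `d mod d₁ < d₁`. If this remainder were positive, `L(u ^ q * v)` would
contain a distance smaller than `d₁`. -/

section Lengths

variable {M : Type*} [Monoid M]

theorem mem_lengths_iff_of_not_isUnit {a : M} (ha : ¬IsUnit a) {k : ℕ} :
    k ∈ lengths a ↔ ∃ l : List M, l.length = k ∧ (∀ x ∈ l, Irreducible x) ∧ l.prod = a := by
  simp [lengths, ha]

theorem not_isUnit_of_mem_distances_lengths {a : M} {d : ℕ} (hd : d ∈ distances (lengths a)) :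
    ¬IsUnit a := by
  intro ha
  obtain ⟨hd, k, hk, hkd, -⟩ := hd
  simp only [lengths, if_pos ha, Set.mem_singleton_iff] at hk hkd
  omega

variable [IsDedekindFiniteMonoid M]

theorem add_mem_lengths_mul {a b : M} {k l : ℕ} (ha : ¬IsUnit a) (hb : ¬IsUnit b)
    (hk : k ∈ lengths a) (hl : l ∈ lengths b) : k + l ∈ lengths (a * b) := by
  obtain ⟨s, rfl, hs, rfl⟩ := (mem_lengths_iff_of_not_isUnit ha).1 hk
  obtain ⟨t, rfl, ht, rfl⟩ := (mem_lengths_iff_of_not_isUnit hb).1 hl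
  refine (mem_lengths_iff_of_not_isUnit fun h => hb (isUnit_of_mul_isUnit_right h)).2
    ⟨s ++ t, List.length_append, ?_, List.prod_append⟩
  simpa only [List.mem_append, or_imp, forall_and] using ⟨hs, ht⟩

theorem mul_add_mem_lengths_pow_mul {a b : M} {k l : ℕ} (ha : ¬IsUnit a) (hb : ¬IsUnit b)
    (hk : k ∈ lengths a) (hl : l ∈ lengths b) (n : ℕ) : n * k + l ∈ lengths (a ^ n * b) := by
  induction n with
  | zero => simpa using hl
  | succ n ih =>
    have hnb : ¬IsUnit (a ^ n * b) := fun h => hb (isUnit_of_mul_isUnit_right h)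
    rw [pow_succ', mul_assoc, show (n + 1) * k + l = k + (n * k + l) by ring]
    exact add_mem_lengths_mul ha hnb hk ih

end Lengths

theorem exists_mem_distances_le_sub {L : Set ℕ} {x y : ℕ} (hx : x ∈ L) (hy : y ∈ L)
    (hxy : x < y) : ∃ d ∈ distances L, d ≤ y - x := by
  set S : Set ℕ := {m | m ∈ L ∧ x < m ∧ m ≤ y}
  obtain ⟨hmL, hxm, hmy⟩ : sInf S ∈ S := Nat.sInf_mem ⟨y, hy, hxy, le_rfl⟩
  refine ⟨sInf S - x, ⟨by omega, x, hx, by rwa [Nat.add_sub_cancel' hxm.le], ?_⟩, by omega⟩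
  intro m hm hxm' hmx
  rcases hxm'.eq_or_lt with h | h
  · exact Or.inl h.symm
  · have := Nat.sInf_le (show m ∈ S from ⟨hm, h, by omega⟩)
    omega

section DeltaH

variable {M : Type*} [Monoid M] [IsDedekindFiniteMonoid M]

theorem exists_mem_deltaH_le_sub_mul {d₁ d : ℕ} (hd₁ : d₁ ∈ DeltaH M) (hd : d ∈ DeltaH M)
    {q : ℕ} (hq : q * d₁ < d) : ∃ e ∈ DeltaH M, e ≤ d - q * d₁ := by
  obtain ⟨u, hu⟩ := Set.mem_iUnion.1 hd₁
  obtain ⟨v, hv⟩ := Set.mem_iUnion.1 hd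
  have hu' := not_isUnit_of_mem_distances_lengths hu
  have hv' := not_isUnit_of_mem_distances_lengths hv
  obtain ⟨-, k, hk, hkd, -⟩ := hu
  obtain ⟨-, l, hl, hld, -⟩ := hv
  have hx := mul_add_mem_lengths_pow_mul hu' hv' hkd hl q
  have hy := mul_add_mem_lengths_pow_mul hu' hv' hk hld q
  obtain ⟨e, he, hle⟩ := exists_mem_distances_le_sub hx hy (by rw [mul_add]; omega)
  exact ⟨e, Set.mem_iUnion.2 ⟨_, he⟩, by rw [mul_add] at hle; omega⟩

theorem sInf_deltaH_dvd {d : ℕ} (hd : d ∈ DeltaH M) : sInf (DeltaH M) ∣ d := by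
  set d₁ := sInf (DeltaH M)
  have hd₁ : d₁ ∈ DeltaH M := Nat.sInf_mem ⟨d, hd⟩
  have hpos : 0 < d₁ := (Set.mem_iUnion.1 hd₁).choose_spec.1
  have hdiv := Nat.div_add_mod' d d₁
  have hmod := Nat.mod_lt d hpos
  refine Nat.dvd_of_mod_eq_zero (by_contra fun hr => ?_)
  obtain ⟨e, he, hle⟩ := exists_mem_deltaH_le_sub_mul hd₁ hd (q := d / d₁) (by omega)
  have := Nat.sInf_le he
  omega

end DeltaH

theorem stmt4_general {M : Type*} [CancelMonoid M] (hne : (DeltaH M).Nonempty) :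
    sInf (DeltaH M) ∈ DeltaH M ∧ ∀ d ∈ DeltaH M, sInf (DeltaH M) ∣ d :=
  ⟨Nat.sInf_mem hne, fun _ => sInf_deltaH_dvd⟩

theorem stmt4 {M : Type*} [CancelMonoid M] (hA : Atomic M) (hne : (DeltaH M).Nonempty) :
    sInf (DeltaH M) ∈ DeltaH M ∧ ∀ d ∈ DeltaH M, sInf (DeltaH M) ∣ d :=
  stmt4_general hne
end

section
/- Let H be an atomic cancellative monoid with finite nonempty set of distances Δ(H) and d = min Δ(H). Suppose that either ρ_k(H) = ∞ for some k ∈ ℕ, or there is M ∈ ℕ with ρ_k(H) − ρ_{k−1}(H) ≤ M for all k ≥ 2. Then lim_{k→∞} |U_k(H)|/k = (1/d)·(ρ(H) − 1/ρ(H)), where both sides are infinite if ρ_k(H) = ∞ for some k. -/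
open scoped Classical ENNReal

/-!
All lengths in `U_k` are congruent modulo `d = min Δ(H)`, because every distance is a multiple
of `d`, and they lie between `k / ρ(H)` and `k ρ(H)`; hence `|U_k| ≤ k (ρ - ρ⁻¹) / d + 1`.
Conversely, if `a` has lengths `m < n = m + D d` and `w` has lengths `x` and `x + d`, then
`a ^ (m N) * w ^ D` and `a ^ (n N) * w ^ D` share the length `m n N + D x`, and together their
lengths fill the progression of difference `d` from `m² N + D x` to `n² N + D x`. So
`liminf |U_k| / k ≥ (n / m - m / n) / d`, and the supremum of `n / m - m / n` over all such
pairs is `ρ - ρ⁻¹`, since `t ↦ t - t⁻¹` is monotone and continuous.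
-/

open Filter Topology

section Distances

theorem exists_sub_mem_distances_of_lt {L : Set ℕ} {p q : ℕ} (hp : p ∈ L) (hq : q ∈ L)
    (hpq : p < q) : ∃ s ∈ L, p < s ∧ s ≤ q ∧ s - p ∈ distances L := by
  have hex : ∃ s, s ∈ L ∧ p < s := ⟨q, hq, hpq⟩
  obtain ⟨hsL, hps⟩ := Nat.find_spec hex
  refine ⟨Nat.find hex, hsL, hps, Nat.find_min' hex ⟨hq, hpq⟩, by omega, p, hp,
    by rwa [Nat.add_sub_cancel' hps.le], fun m hm hpm hms => ?_⟩
  rcases hpm.eq_or_lt with h | h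
  · exact .inl h.symm
  · have := Nat.find_min' hex ⟨hm, h⟩
    exact .inr (by omega)

theorem dvd_sub_of_forall_mem_distances {L : Set ℕ} {d : ℕ} (h : ∀ δ ∈ distances L, d ∣ δ)
    {p q : ℕ} (hp : p ∈ L) (hq : q ∈ L) : d ∣ q - p := by
  induction hn : q - p using Nat.strong_induction_on generalizing p with
  | _ n ih =>
    rcases Nat.lt_or_ge p q with hpq | hqp
    · obtain ⟨s, hs, hps, hsq, hδ⟩ := exists_sub_mem_distances_of_lt hp hq hpq
      rw [← hn, show q - p = (s - p) + (q - s) by omega]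
      exact dvd_add (h _ hδ) (ih (q - s) (by omega) hs rfl)
    · simp [← hn, Nat.sub_eq_zero_of_le hqp]

end Distances

section Lengths

variable {M : Type*} [Monoid M]

def HasLength (a : M) (n : ℕ) : Prop :=
  ∃ l : List M, l.length = n ∧ (∀ x ∈ l, Irreducible x) ∧ l.prod = a

theorem hasLength_zero_iff {a : M} : HasLength a 0 ↔ a = 1 := by
  simp [HasLength, eq_comm]

theorem Irreducible.hasLength_one {u : M} (hu : Irreducible u) : HasLength u 1 :=
  ⟨[u], rfl, by simpa using hu, List.prod_singleton⟩

theorem HasLength.mul {a b : M} {m n : ℕ} (ha : HasLength a m) (hb : HasLength b n) :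
    HasLength (a * b) (m + n) := by
  obtain ⟨l₁, rfl, hl₁, rfl⟩ := ha
  obtain ⟨l₂, rfl, hl₂, rfl⟩ := hb
  exact ⟨l₁ ++ l₂, List.length_append, by simpa [or_imp, forall_and] using ⟨hl₁, hl₂⟩,
    List.prod_append⟩

theorem HasLength.pow {a : M} {n : ℕ} (ha : HasLength a n) (s : ℕ) :
    HasLength (a ^ s) (s * n) := by
  induction s with
  | zero => simpa using hasLength_zero_iff.2 rfl
  | succ s ih => simpa [pow_succ, add_mul] using ih.mul ha

theorem HasLength.pow_of_hasLength_add {a : M} {m e : ℕ} (ha : HasLength a m)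
    (ha' : HasLength a (m + e)) {i s : ℕ} (his : i ≤ s) : HasLength (a ^ s) (s * m + i * e) := by
  have h := (ha.pow (s - i)).mul (ha'.pow i)
  rwa [← pow_add, Nat.sub_add_cancel his, show (s - i) * m + i * (m + e) = s * m + i * e by
    rw [mul_add, ← add_assoc, ← add_mul, Nat.sub_add_cancel his]] at h

theorem HasLength.not_isUnit [IsDedekindFiniteMonoid M] {a : M} {n : ℕ} (h : HasLength a n)
    (hn : n ≠ 0) : ¬IsUnit a := by
  obtain ⟨_ | ⟨x, l⟩, hl, hirr, rfl⟩ := h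
  · exact absurd hl.symm hn
  · rw [List.prod_cons]
    exact fun hu => (hirr x (by simp)).not_isUnit (isUnit_of_mul_isUnit_left hu)

theorem mem_lengths_iff {a : M} (ha : ¬IsUnit a) {n : ℕ} : n ∈ lengths a ↔ HasLength a n := by
  rw [lengths, if_neg ha]; rfl

theorem pos_of_mem_lengths {a : M} (ha : ¬IsUnit a) {n : ℕ} (hn : n ∈ lengths a) : 0 < n := by
  refine Nat.pos_of_ne_zero fun h0 => ha ?_
  rw [mem_lengths_iff ha, h0, hasLength_zero_iff] at hn
  exact hn ▸ isUnit_one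

theorem mem_lengthUnion_iff {k ℓ : ℕ} :
    ℓ ∈ lengthUnion M k ↔ ∃ a : M, HasLength a k ∧ HasLength a ℓ := by
  constructor
  · rintro ⟨l₁, l₂, h₁, h₂, hi₁, hi₂, hp⟩
    exact ⟨l₁.prod, ⟨l₁, h₁, hi₁, rfl⟩, ⟨l₂, h₂, hi₂, hp.symm⟩⟩
  · rintro ⟨a, ⟨l₁, h₁, hi₁, rfl⟩, ⟨l₂, h₂, hi₂, hp⟩⟩
    exact ⟨l₁, l₂, h₁, h₂, hi₁, hi₂, hp.symm⟩

end Lengths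

section DeltaH

variable {M : Type*} [Monoid M]

theorem mem_DeltaH_iff {δ : ℕ} : δ ∈ DeltaH M ↔ ∃ a : M, δ ∈ distances (lengths a) :=
  Set.mem_iUnion

theorem not_isUnit_of_mem_distances {a : M} {δ : ℕ} (h : δ ∈ distances (lengths a)) :
    ¬IsUnit a := by
  obtain ⟨hδ, k, hk, hkδ, -⟩ := h
  intro ha
  simp only [lengths, if_pos ha, Set.mem_singleton_iff] at hk hkδ
  omega

theorem sInf_DeltaH_pos (hne : (DeltaH M).Nonempty) : 0 < sInf (DeltaH M) := by
  obtain ⟨a, ha⟩ := mem_DeltaH_iff.1 (Nat.sInf_mem hne)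
  exact ha.1

theorem exists_hasLength_add_sInf_DeltaH (hne : (DeltaH M).Nonempty) :
    ∃ (w : M) (x : ℕ), 0 < x ∧ HasLength w x ∧ HasLength w (x + sInf (DeltaH M)) := by
  obtain ⟨w, hw⟩ := mem_DeltaH_iff.1 (Nat.sInf_mem hne)
  have hwu := not_isUnit_of_mem_distances hw
  obtain ⟨-, x, hx, hxd, -⟩ := hw
  exact ⟨w, x, pos_of_mem_lengths hwu hx, (mem_lengths_iff hwu).1 hx, (mem_lengths_iff hwu).1 hxd⟩

theorem exists_irreducible (hne : (DeltaH M).Nonempty) : ∃ u : M, Irreducible u := by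
  obtain ⟨-, x, hx, ⟨_ | ⟨u, l⟩, hl, hirr, -⟩, -⟩ := exists_hasLength_add_sInf_DeltaH hne
  · simp at hl; omega
  · exact ⟨u, hirr u (by simp)⟩

theorem monotone_encard_lengthUnion (hne : (DeltaH M).Nonempty) :
    Monotone fun k => (lengthUnion M k).encard := by
  refine monotone_nat_of_le_succ fun k => ?_
  obtain ⟨u, hu⟩ := exists_irreducible hne
  have hsub : (· + 1) '' lengthUnion M k ⊆ lengthUnion M (k + 1) := by
    rintro _ ⟨ℓ, hℓ, rfl⟩
    obtain ⟨a, hak, haℓ⟩ := mem_lengthUnion_iff.1 hℓ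
    exact mem_lengthUnion_iff.2 ⟨a * u, hak.mul hu.hasLength_one, haℓ.mul hu.hasLength_one⟩
  calc (lengthUnion M k).encard = ((· + 1) '' lengthUnion M k).encard :=
        ((add_left_injective 1).injOn.encard_image).symm
    _ ≤ (lengthUnion M (k + 1)).encard := Set.encard_mono hsub

variable [IsDedekindFiniteMonoid M]

/-- If `d = min Δ(H)` did not divide a distance `g` between lengths `y < y + g` of `c`, then
multiplying `c` by `w ^ (g / d)`, where `w` has lengths `x` and `x + d`, would produce two lengths
at distance `g % d < d`, hence a distance smaller than `d`. -/
theorem sInf_DeltaH_dvd {g : ℕ} (hg : g ∈ DeltaH M) : sInf (DeltaH M) ∣ g := by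
  set d := sInf (DeltaH M)
  have hd : 0 < d := sInf_DeltaH_pos ⟨g, hg⟩
  obtain ⟨w, x, -, hw, hw'⟩ := exists_hasLength_add_sInf_DeltaH ⟨g, hg⟩
  obtain ⟨c, hgc⟩ := mem_DeltaH_iff.1 hg
  have hc := not_isUnit_of_mem_distances hgc
  obtain ⟨-, y, hy, hyg, -⟩ := hgc
  have hy0 := pos_of_mem_lengths hc hy
  rw [mem_lengths_iff hc] at hy hyg
  have hA : HasLength (c * w ^ (g / d)) (y + g / d * (x + d)) := hy.mul (hw'.pow _)
  have hB : HasLength (c * w ^ (g / d)) (y + g + g / d * x) := hyg.mul (hw.pow _)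
  have hAB : y + g + g / d * x = y + g / d * (x + d) + g % d := by
    have := Nat.div_add_mod' g d
    rw [mul_add]
    omega
  by_contra hnd
  have hr : 0 < g % d := Nat.pos_of_ne_zero fun h => hnd (Nat.dvd_of_mod_eq_zero h)
  have he : ¬IsUnit (c * w ^ (g / d)) := hA.not_isUnit (by omega)
  obtain ⟨s, -, -, hs, hδ⟩ := exists_sub_mem_distances_of_lt
    ((mem_lengths_iff he).2 hA) ((mem_lengths_iff he).2 hB) (by omega)
  have := Nat.sInf_le (mem_DeltaH_iff.2 ⟨_, hδ⟩)
  have := Nat.mod_lt g hd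
  omega

theorem dvd_sub_of_mem_lengths {a : M} {m n : ℕ} (hm : m ∈ lengths a) (hn : n ∈ lengths a) :
    sInf (DeltaH M) ∣ n - m :=
  dvd_sub_of_forall_mem_distances (fun _ hδ => sInf_DeltaH_dvd (mem_DeltaH_iff.2 ⟨a, hδ⟩)) hm hn

theorem dvd_sub_of_mem_lengthUnion {k ℓ ℓ' : ℕ} (hk : k ≠ 0) (hℓ : ℓ ∈ lengthUnion M k)
    (hℓ' : ℓ' ∈ lengthUnion M k) : sInf (DeltaH M) ∣ ℓ' - ℓ := by
  obtain ⟨a, hak, haℓ⟩ := mem_lengthUnion_iff.1 hℓ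
  obtain ⟨b, hbk, hbℓ'⟩ := mem_lengthUnion_iff.1 hℓ'
  have hab : ¬IsUnit (a * b) := (hak.mul hbk).not_isUnit (by omega)
  have h := dvd_sub_of_mem_lengths ((mem_lengths_iff hab).2 (haℓ.mul hbk))
    ((mem_lengths_iff hab).2 (hak.mul hbℓ'))
  rwa [add_comm ℓ k, Nat.add_sub_add_left] at h

end DeltaH

section Elasticity

variable {M : Type*} [Monoid M]

theorem setElasticity_lengths_of_not_isUnit {a : M} (ha : ¬IsUnit a) :
    setElasticity (lengths a) = (⨆ n ∈ lengths a, (n : ℝ≥0∞)) / (sInf (lengths a) : ℕ) := by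
  rw [setElasticity, if_neg]
  intro h0
  exact (pos_of_mem_lengths ha (h0 ▸ Set.mem_singleton 0)).ne' rfl

theorem div_le_elasticity {a : M} (ha : ¬IsUnit a) {m n : ℕ} (hm : m ∈ lengths a)
    (hn : n ∈ lengths a) : (n : ℝ≥0∞) / m ≤ elasticity M :=
  calc (n : ℝ≥0∞) / m ≤ (⨆ n ∈ lengths a, (n : ℝ≥0∞)) / (sInf (lengths a) : ℕ) :=
        ENNReal.div_le_div (le_iSup₂ (f := fun n (_ : n ∈ lengths a) => (n : ℝ≥0∞)) n hn)
          (Nat.cast_le.2 (Nat.sInf_le hm))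
    _ = setElasticity (lengths a) := (setElasticity_lengths_of_not_isUnit ha).symm
    _ ≤ elasticity M := le_iSup (fun a : M => setElasticity (lengths a)) a

theorem iSup_sub_inv_le {ι : Sort*} {g : ι → ℝ≥0∞} {c : ℝ≥0∞} (h : ∀ i, g i - (g i)⁻¹ ≤ c) :
    (⨆ i, g i) - (⨆ i, g i)⁻¹ ≤ c := by
  rcases eq_or_ne (⨆ i, g i) 0 with h0 | h0
  · simp [h0]
  have hmono : Monotone fun t : ℝ≥0∞ => t - t⁻¹ := fun s t hst =>
    tsub_le_tsub hst (ENNReal.inv_le_inv.2 hst)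
  have hcont : ContinuousAt (fun t : ℝ≥0∞ => t - t⁻¹) (⨆ i, g i) :=
    ENNReal.Tendsto.sub tendsto_id (continuous_inv.tendsto _) (Or.inr (ENNReal.inv_ne_top.2 h0))
  rw [hmono.map_iSup_of_continuousAt hcont (by simp)]
  exact iSup_le h

theorem elasticity_sub_inv_le {c : ℝ≥0∞} (h : ∀ a : M, ¬IsUnit a → ∀ m ∈ lengths a,
      ∀ n ∈ lengths a, m < n → (n : ℝ≥0∞) / m - m / n ≤ c) :
    elasticity M - (elasticity M)⁻¹ ≤ c := by
  refine iSup_sub_inv_le fun a => ?_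
  by_cases ha : IsUnit a
  · simp [lengths, ha, setElasticity]
  rw [setElasticity_lengths_of_not_isUnit ha]
  simp only [ENNReal.iSup_div]
  refine iSup_sub_inv_le fun n => iSup_sub_inv_le fun hn => ?_
  have hμ := Nat.sInf_mem ⟨n, hn⟩
  have hμ0 : ((sInf (lengths a) : ℕ) : ℝ≥0∞) ≠ 0 := by
    exact_mod_cast (pos_of_mem_lengths ha hμ).ne'
  rcases (Nat.sInf_le hn).eq_or_lt with he | hlt
  · rw [← he, ENNReal.div_self hμ0 (ENNReal.natCast_ne_top _)]
    simp
  · rw [ENNReal.inv_div (Or.inl (ENNReal.natCast_ne_top _)) (Or.inl hμ0)]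
    exact h a ha _ hμ n hn hlt

theorem mem_lengthUnion_comm {k ℓ : ℕ} : ℓ ∈ lengthUnion M k ↔ k ∈ lengthUnion M ℓ := by
  simp only [mem_lengthUnion_iff, and_comm]

variable [IsDedekindFiniteMonoid M]

theorem ne_zero_of_mem_lengthUnion {k ℓ : ℕ} (hk : k ≠ 0) (hℓ : ℓ ∈ lengthUnion M k) : ℓ ≠ 0 := by
  obtain ⟨a, hak, haℓ⟩ := mem_lengthUnion_iff.1 hℓ
  rintro rfl
  exact hak.not_isUnit hk (hasLength_zero_iff.1 haℓ ▸ isUnit_one)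

theorem le_mul_elasticity_of_mem_lengthUnion {k ℓ : ℕ} (hk : k ≠ 0) (hℓ : ℓ ∈ lengthUnion M k) :
    (ℓ : ℝ≥0∞) ≤ k * elasticity M := by
  obtain ⟨a, hak, haℓ⟩ := mem_lengthUnion_iff.1 hℓ
  have ha := hak.not_isUnit hk
  rw [← mem_lengths_iff ha] at hak haℓ
  rw [mul_comm, ← ENNReal.div_le_iff_le_mul (Or.inl (by exact_mod_cast hk))
    (Or.inl (ENNReal.natCast_ne_top k))]
  exact div_le_elasticity ha hak haℓ

theorem div_elasticity_le_of_mem_lengthUnion {k ℓ : ℕ} (hk : k ≠ 0) (hℓ : ℓ ∈ lengthUnion M k) :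
    (k : ℝ≥0∞) / elasticity M ≤ ℓ :=
  ENNReal.div_le_of_le_mul' <| mul_comm (elasticity M) ℓ ▸
    le_mul_elasticity_of_mem_lengthUnion (ne_zero_of_mem_lengthUnion hk hℓ)
      (mem_lengthUnion_comm.1 hℓ)

end Elasticity

section Counting

theorem Set.encard_le_of_dvd_sub_of_subset_Icc {S : Set ℕ} {d a b : ℕ} (hd : 0 < d)
    (hS : ∀ x ∈ S, ∀ y ∈ S, d ∣ y - x) (hab : S ⊆ Set.Icc a b) :
    S.encard ≤ ((b - a) / d + 1 : ℕ) := by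
  have hinj : Set.InjOn (fun x => (x - a) / d) S := by
    intro x hx y hy hxy
    wlog hle : x ≤ y generalizing x y
    · exact (this hy hx hxy.symm (by omega)).symm
    obtain ⟨t, ht⟩ := hS x hx y hy
    have hy' : (y - a) / d = (x - a) / d + t := by
      rw [show y - a = x - a + d * t by have := (hab hx).1; omega, Nat.add_mul_div_left _ _ hd]
    have ht0 : t = 0 := by simp only at hxy; omega
    subst ht0
    omega
  calc S.encard = ((fun x => (x - a) / d) '' S).encard := hinj.encard_image.symm
    _ ≤ (Set.Iic ((b - a) / d)).encard := Set.encard_mono <| by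
        rintro _ ⟨x, hx, rfl⟩
        exact Nat.div_le_div_right (Nat.sub_le_sub_right (hab hx).2 a)
    _ = ((b - a) / d + 1 : ℕ) := by
        rw [← Finset.coe_Iic, Set.encard_coe_eq_coe_finsetCard, Nat.card_Iic]

theorem Set.encard_le_of_dvd_sub_of_bounds {S : Set ℕ} {d : ℕ} (hd : 0 < d)
    (hS : ∀ x ∈ S, ∀ y ∈ S, d ∣ y - x) {lo hi : ℝ≥0∞} (hlo : ∀ x ∈ S, lo ≤ x)
    (hhi : ∀ x ∈ S, (x : ℝ≥0∞) ≤ hi) :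
    (S.encard : ℝ≥0∞) ≤ (hi - lo) / d + 1 := by
  rcases S.eq_empty_or_nonempty with rfl | hne
  · simp
  rcases eq_or_ne hi ⊤ with rfl | hhi_top
  · obtain ⟨x, hx⟩ := hne
    have hlo_top : lo ≠ ⊤ := ((hlo x hx).trans_lt (ENNReal.natCast_lt_top x)).ne
    simp [ENNReal.sub_eq_top_iff.2 ⟨rfl, hlo_top⟩, ENNReal.top_div_of_ne_top]
  have hbdd : BddAbove S := by
    obtain ⟨n, hn⟩ := ENNReal.exists_nat_gt hhi_top
    exact ⟨n, fun x hx => by exact_mod_cast ((hhi x hx).trans_lt hn).le⟩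
  have hcard := ENat.toENNReal_le.2 <| Set.encard_le_of_dvd_sub_of_subset_Icc hd hS
    fun x hx => ⟨Nat.sInf_le hx, le_csSup hbdd hx⟩
  rw [ENat.toENNReal_coe, Nat.cast_add, Nat.cast_one] at hcard
  refine hcard.trans (add_le_add_left ?_ 1)
  have hd0 : (d : ℝ≥0∞) ≠ 0 := by exact_mod_cast hd.ne'
  calc (((sSup S - sInf S) / d : ℕ) : ℝ≥0∞) ≤ ((sSup S - sInf S : ℕ) : ℝ≥0∞) / d := by
        rw [ENNReal.le_div_iff_mul_le (Or.inl hd0) (Or.inl (ENNReal.natCast_ne_top d))]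
        exact_mod_cast Nat.div_mul_le_self _ _
    _ ≤ (hi - lo) / d := by
        rw [ENNReal.natCast_sub]
        gcongr
        exacts [hhi _ (Nat.sSup_mem hne hbdd), hlo _ (Nat.sInf_mem hne)]

end Counting

section UpperBound

variable {M : Type*} [Monoid M] [IsDedekindFiniteMonoid M]

theorem encard_lengthUnion_le (hne : (DeltaH M).Nonempty) {k : ℕ} (hk : k ≠ 0) :
    ((lengthUnion M k).encard : ℝ≥0∞) ≤
      k * ((elasticity M - (elasticity M)⁻¹) / sInf (DeltaH M)) + 1 := by
  refine (Set.encard_le_of_dvd_sub_of_bounds (sInf_DeltaH_pos hne)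
    (fun _ hx _ hy => dvd_sub_of_mem_lengthUnion hk hx hy)
    (fun _ => div_elasticity_le_of_mem_lengthUnion hk)
    (fun _ => le_mul_elasticity_of_mem_lengthUnion hk)).trans_eq ?_
  rw [div_eq_mul_inv (k : ℝ≥0∞), ← ENNReal.mul_sub fun _ _ => ENNReal.natCast_ne_top k,
    mul_div_assoc]

theorem limsup_div_le_of_le_mul_add {f : ℕ → ℝ≥0∞} {T C : ℝ≥0∞} (hC : C ≠ ⊤)
    (h : ∀ᶠ k in atTop, f k ≤ k * T + C) : limsup (fun k => f k / k) atTop ≤ T := by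
  have hev : ∀ᶠ k : ℕ in atTop, f k / k ≤ T + C / k := by
    filter_upwards [h, eventually_ne_atTop 0] with k hk hk0
    calc f k / k ≤ (k * T + C) / k := ENNReal.div_le_div_right hk _
      _ = T + C / k := by
        rw [← ENNReal.div_add_div_same, mul_comm, ENNReal.mul_div_cancel_right
          (by exact_mod_cast hk0) (ENNReal.natCast_ne_top k)]
  have hlim : Tendsto (fun k : ℕ => T + C / k) atTop (𝓝 T) := by
    simpa using tendsto_const_nhds.add (ENNReal.Tendsto.const_div
      ENNReal.tendsto_nat_nhds_top (Or.inr hC))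
  exact (limsup_le_limsup hev).trans_eq hlim.limsup_eq

end UpperBound

section LowerBound

theorem tendsto_natCast_sub_div_natCast (c : ℕ) :
    Tendsto (fun k : ℕ => ((k : ℝ≥0∞) - c) / k) atTop (𝓝 1) := by
  have h : Tendsto (fun k : ℕ => 1 - (c : ℝ≥0∞) / k) atTop (𝓝 (1 - c / ⊤)) :=
    ENNReal.Tendsto.sub tendsto_const_nhds
      (ENNReal.Tendsto.const_div ENNReal.tendsto_nat_nhds_top (Or.inr (ENNReal.natCast_ne_top c)))
      (Or.inl ENNReal.one_ne_top)
  rw [ENNReal.div_top, tsub_zero] at h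
  refine h.congr' ?_
  filter_upwards [eventually_ne_atTop 0] with k hk
  rw [ENNReal.sub_div fun _ _ => by exact_mod_cast hk,
    ENNReal.div_self (by exact_mod_cast hk) (ENNReal.natCast_ne_top k)]

theorem le_liminf_div_of_monotone {f : ℕ → ℝ≥0∞} (hf : Monotone f) {A P q : ℕ} (hP : P ≠ 0)
    (h : ∀ N, (A : ℝ≥0∞) * N ≤ f (P * N + q)) :
    (A : ℝ≥0∞) / P ≤ liminf (fun k => f k / k) atTop := by
  have hP0 : (P : ℝ≥0∞) ≠ 0 := by exact_mod_cast hP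
  have hlow : ∀ᶠ k : ℕ in atTop, (A : ℝ≥0∞) / P * (((k : ℝ≥0∞) - (q + P : ℕ)) / k) ≤ f k / k := by
    filter_upwards [eventually_ge_atTop q] with k hqk
    have hNk : (k - q) / P * P + q ≤ k := by
      have := Nat.div_mul_le_self (k - q) P
      omega
    have hkN : k - (q + P) ≤ (k - q) / P * P := by
      have := Nat.lt_div_mul_add (a := k - q) (Nat.pos_of_ne_zero hP)
      omega
    calc (A : ℝ≥0∞) / P * (((k : ℝ≥0∞) - (q + P : ℕ)) / k)
        = (A : ℝ≥0∞) / P * ((k : ℝ≥0∞) - (q + P : ℕ)) / k := (mul_div_assoc _ _ _).symm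
      _ ≤ (A : ℝ≥0∞) / P * (P * ((k - q) / P : ℕ)) / k := by
          gcongr
          rw [← ENNReal.natCast_sub, mul_comm]
          exact_mod_cast hkN
      _ = A * ((k - q) / P : ℕ) / k := by
          rw [← mul_assoc, ENNReal.div_mul_cancel hP0 (ENNReal.natCast_ne_top P)]
      _ ≤ f k / k := by
          gcongr
          exact (h _).trans (hf (by rw [mul_comm]; exact hNk))
  have hlim := ENNReal.Tendsto.const_mul (a := (A : ℝ≥0∞) / P)
    (tendsto_natCast_sub_div_natCast (q + P)) (Or.inl one_ne_zero)
  rw [mul_one] at hlim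
  exact hlim.liminf_eq.symm.trans_le (liminf_le_liminf hlow)

theorem natCast_div_sub_div_natCast {m n : ℕ} (hm : 0 < m) (hmn : m ≤ n) :
    (n : ℝ≥0∞) / m - m / n = ((n * n - m * m : ℕ) : ℝ≥0∞) / (m * n : ℕ) := by
  have hm0 : (m : ℝ≥0∞) ≠ 0 := by exact_mod_cast hm.ne'
  have hn0 : (n : ℝ≥0∞) ≠ 0 := by exact_mod_cast (hm.trans_le hmn).ne'
  have h₁ : (n : ℝ≥0∞) / m = ((n * n : ℕ) : ℝ≥0∞) / (m * n : ℕ) := by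
    push_cast
    rw [ENNReal.mul_div_mul_right _ _ hn0 (ENNReal.natCast_ne_top n)]
  have h₂ : (m : ℝ≥0∞) / n = ((m * m : ℕ) : ℝ≥0∞) / (m * n : ℕ) := by
    push_cast
    rw [ENNReal.mul_div_mul_left _ _ hm0 (ENNReal.natCast_ne_top m)]
  refine ENNReal.sub_eq_of_eq_add (ENNReal.div_ne_top (ENNReal.natCast_ne_top m) hn0) ?_
  rw [h₁, h₂, ENNReal.div_add_div_same, ← Nat.cast_add,
    Nat.sub_add_cancel (Nat.mul_le_mul hmn hmn)]

variable {M : Type*} [Monoid M] {a w : M} {m x d D : ℕ}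

theorem HasLength.pow_mul_pow (ha : HasLength a m) (ha' : HasLength a (m + D * d))
    (hw : HasLength w x) (hw' : HasLength w (x + d)) {s t : ℕ} (ht : t ≤ s * D + D) :
    HasLength (a ^ s * w ^ D) (s * m + D * x + t * d) := by
  obtain ⟨i, j, his, hjD, rfl⟩ : ∃ i j, i ≤ s ∧ j ≤ D ∧ i * D + j = t := by
    rcases Nat.eq_zero_or_pos D with rfl | hD
    · exact ⟨0, 0, Nat.zero_le _, le_rfl, by simp at ht; omega⟩
    rcases le_or_gt t (s * D) with h | h
    · exact ⟨t / D, t % D, Nat.div_le_of_le_mul (by rwa [mul_comm]), (Nat.mod_lt _ hD).le,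
        Nat.div_add_mod' t D⟩
    · exact ⟨s, t - s * D, le_rfl, by omega, by omega⟩
  convert (ha.pow_of_hasLength_add ha' his).mul (hw.pow_of_hasLength_add hw' hjD) using 1
  ring

theorem add_mul_mem_lengthUnion (ha : HasLength a m) (ha' : HasLength a (m + D * d))
    (hw : HasLength w x) (hw' : HasLength w (x + d)) (N : ℕ) {j : ℕ}
    (hj : j ≤ (2 * m + D * d) * D * N) :
    m * m * N + D * x + j * d ∈ lengthUnion M (m * (m + D * d) * N + D * x) := by
  rcases le_or_gt j (m * N * D) with h | h
  · refine mem_lengthUnion_iff.2 ⟨a ^ (m * N) * w ^ D, ?_, ?_⟩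
    · convert ha.pow_mul_pow ha' hw hw' (t := m * N * D) (Nat.le_add_right _ _) using 1
      ring
    · convert ha.pow_mul_pow ha' hw hw' (t := j) (h.trans (Nat.le_add_right _ _)) using 1
      ring
  · obtain ⟨t, rfl⟩ := Nat.exists_eq_add_of_le h.le
    refine mem_lengthUnion_iff.2 ⟨a ^ ((m + D * d) * N) * w ^ D, ?_, ?_⟩
    · convert ha.pow_mul_pow ha' hw hw' (t := 0) (Nat.zero_le _) using 1
      ring
    · have ht : t ≤ (m + D * d) * N * D + D := by
        have e : (2 * m + D * d) * D * N = m * N * D + (m + D * d) * N * D := by ring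
        omega
      convert ha.pow_mul_pow ha' hw hw' ht using 1
      ring

theorem le_encard_lengthUnion (ha : HasLength a m) (ha' : HasLength a (m + D * d))
    (hw : HasLength w x) (hw' : HasLength w (x + d)) (hd : d ≠ 0) (N : ℕ) :
    (((2 * m + D * d) * D * N + 1 : ℕ) : ℕ∞) ≤
      (lengthUnion M (m * (m + D * d) * N + D * x)).encard := by
  have hinj : Function.Injective fun j => m * m * N + D * x + j * d := fun u v huv => by
    simpa [hd] using huv
  calc (((2 * m + D * d) * D * N + 1 : ℕ) : ℕ∞) = (Set.Iic ((2 * m + D * d) * D * N)).encard := by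
        rw [← Finset.coe_Iic, Set.encard_coe_eq_coe_finsetCard, Nat.card_Iic]
    _ = ((fun j => m * m * N + D * x + j * d) '' Set.Iic ((2 * m + D * d) * D * N)).encard :=
        hinj.injOn.encard_image.symm
    _ ≤ _ := Set.encard_mono <| by
        rintro _ ⟨j, hj, rfl⟩
        exact add_mul_mem_lengthUnion ha ha' hw hw' N hj

theorem div_sub_div_le_mul_liminf [IsDedekindFiniteMonoid M] (hne : (DeltaH M).Nonempty)
    (ha : ¬IsUnit a) {n : ℕ} (hm : m ∈ lengths a) (hn : n ∈ lengths a) (hmn : m ≤ n) :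
    (n : ℝ≥0∞) / m - m / n ≤
      ((sInf (DeltaH M) : ℕ) : ℝ≥0∞) *
        liminf (fun k => ((lengthUnion M k).encard : ℝ≥0∞) / k) atTop := by
  have hd := sInf_DeltaH_pos hne
  obtain ⟨w, x, -, hw, hw'⟩ := exists_hasLength_add_sInf_DeltaH hne
  obtain ⟨D, hD⟩ := dvd_sub_of_mem_lengths hm hn
  set d := sInf (DeltaH M)
  obtain rfl : n = m + D * d := by rw [mul_comm] at hD; omega
  have hm0 := pos_of_mem_lengths ha hm
  rw [mem_lengths_iff ha] at hm hn
  have hP : m * (m + D * d) ≠ 0 := by positivity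
  have hlow := le_liminf_div_of_monotone (A := (2 * m + D * d) * D) (q := D * x)
    (fun _ _ h => ENat.toENNReal_le.2 (monotone_encard_lengthUnion hne h)) hP fun N => by
      have h := ENat.toENNReal_le.2 (le_encard_lengthUnion hm hn hw hw' hd.ne' N)
      rw [ENat.toENNReal_coe] at h
      exact le_trans (by exact_mod_cast Nat.le_succ _) h
  have hsq : (m + D * d) * (m + D * d) - m * m = d * ((2 * m + D * d) * D) :=
    Nat.sub_eq_of_eq_add (by ring)
  rw [natCast_div_sub_div_natCast hm0 (Nat.le_add_right _ _), hsq, Nat.cast_mul, mul_div_assoc]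
  gcongr

end LowerBound

theorem stmt9_general {M : Type*} [CancelMonoid M] (hne : (DeltaH M).Nonempty) :
    Filter.Tendsto (fun k : ℕ => ((lengthUnion M k).encard : ℝ≥0∞) / (k : ℝ≥0∞))
      Filter.atTop
      (nhds ((1 / ((sInf (DeltaH M) : ℕ) : ℝ≥0∞)) * (elasticity M - 1 / elasticity M))) := by
  have hd : ((sInf (DeltaH M) : ℕ) : ℝ≥0∞) ≠ 0 := by exact_mod_cast (sInf_DeltaH_pos hne).ne'
  rw [one_div, one_div, mul_comm, ← div_eq_mul_inv]
  refine tendsto_of_le_liminf_of_limsup_le ?_ ?_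
  · rw [ENNReal.div_le_iff hd (ENNReal.natCast_ne_top _), mul_comm]
    exact elasticity_sub_inv_le fun a ha m hm n hn hmn =>
      div_sub_div_le_mul_liminf hne ha hm hn hmn.le
  · exact limsup_div_le_of_le_mul_add ENNReal.one_ne_top
      ((eventually_ne_atTop 0).mono fun k hk => encard_lengthUnion_le hne hk)

theorem stmt9 {M : Type*} [CancelMonoid M] (hA : Atomic M)
    (hfin : (DeltaH M).Finite) (hne : (DeltaH M).Nonempty)
    (hhyp : (∃ k : ℕ, 1 ≤ k ∧ rhoK M k = ⊤) ∨
      ∃ Mb : ℕ, ∀ k : ℕ, 2 ≤ k → rhoK M k ≤ rhoK M (k - 1) + (Mb : ℝ≥0∞)) :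
    Filter.Tendsto (fun k : ℕ => ((lengthUnion M k).encard : ℝ≥0∞) / (k : ℝ≥0∞))
      Filter.atTop
      (nhds ((1 / ((sInf (DeltaH M) : ℕ) : ℝ≥0∞)) * (elasticity M - 1 / elasticity M))) :=
  stmt9_general hne
end

section
/- Let H be a finitely generated reduced commutative cancellative monoid. Then H is a BF-monoid, the set of distances Δ(H) is finite, and the elasticity ρ(H) is finite. Moreover, there exists a ∈ H with ρ(L(a)) = ρ(H), and there exists M ∈ ℕ such that ρ_k(H) − ρ_{k−1}(H) ≤ M for all k ≥ 2. -/
open scoped Classical ENNReal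

/-!
Index the finitely many atoms of `H` by `ι` and send `v : ι → ℕ` to `∏ i, g i ^ v i`. As `H` is
atomic this map is onto, and `L(a)` is the set of sizes `∑ i, v i` of the vectors `v` over `a`.
By cancellativity every fibre is an antichain of `ℕ^ι`, hence finite by Dickson's lemma. The pairs
`(v, w)` with equal images form a submonoid of `ℕ^ι × ℕ^ι` that is generated by its minimal nonzero
elements, and these are finitely many, again by Dickson's lemma. Everything is then controlled by
the minimal relations. Passing from one factorization to another through minimal relations
changes the length by at most their largest size `C`, which bounds `Δ(H)` and
`ρ_k(H) - ρ_{k-1}(H)`. The ratio `|w| / |v|` of any relation is at most the largest ratio of a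
minimal relation, and that ratio is attained at the element the relation factorizes.

Atomicity is proved the same way from a finite generating set of nonidentity elements: its fibres
are finite too, and a proper divisor has strictly smaller maximal factorization length.
-/

section FactorVectors

variable {ι M : Type*} [Fintype ι]

def factorLength (v : ι → ℕ) : ℕ := ∑ i, v i

@[simp]
lemma factorLength_zero : factorLength (0 : ι → ℕ) = 0 := by simp [factorLength]

@[simp]
lemma factorLength_add (v w : ι → ℕ) :
    factorLength (v + w) = factorLength v + factorLength w :=
  Finset.sum_add_distrib

@[simp]
lemma factorLength_nsmul (n : ℕ) (v : ι → ℕ) : factorLength (n • v) = n * factorLength v := by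
  simp [factorLength, Finset.mul_sum]

@[simp]
lemma factorLength_single [DecidableEq ι] (i : ι) : factorLength (Pi.single i 1 : ι → ℕ) = 1 := by
  simp [factorLength, Pi.single_apply]

lemma factorLength_eq_zero_iff {v : ι → ℕ} : factorLength v = 0 ↔ v = 0 := by
  simp [factorLength, Finset.sum_eq_zero_iff, funext_iff]

lemma factorLength_mono : Monotone (factorLength : (ι → ℕ) → ℕ) :=
  fun _ _ h => Finset.sum_le_sum fun i _ => h i

lemma factorLength_tsub {v w : ι → ℕ} (h : v ≤ w) :
    factorLength (w - v) = factorLength w - factorLength v := by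
  rw [eq_tsub_iff_add_eq_of_le (factorLength_mono h), add_comm, ← factorLength_add,
    add_tsub_cancel_of_le h]

variable [CommMonoid M] (g : ι → M)

def factorProd (v : ι → ℕ) : M := ∏ i, g i ^ v i

@[simp]
lemma factorProd_zero : factorProd g 0 = 1 := by simp [factorProd]

@[simp]
lemma factorProd_add (v w : ι → ℕ) : factorProd g (v + w) = factorProd g v * factorProd g w := by
  simp [factorProd, pow_add, Finset.prod_mul_distrib]

@[simp]
lemma factorProd_single [DecidableEq ι] (i : ι) : factorProd g (Pi.single i 1) = g i := by
  rw [factorProd, Finset.prod_eq_single i] <;> simp +contextual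

lemma exists_factorProd_eq_list_prod {l : List M} (hl : ∀ x ∈ l, x ∈ Set.range g) :
    ∃ v, factorProd g v = l.prod ∧ factorLength v = l.length := by
  induction l with
  | nil => exact ⟨0, by simp⟩
  | cons x l ih =>
    obtain ⟨v, hv, hlen⟩ := ih fun y hy => hl y (List.mem_cons_of_mem x hy)
    obtain ⟨i, rfl⟩ := hl _ List.mem_cons_self
    exact ⟨Pi.single i 1 + v, by simp [hv], by simp [hlen, add_comm]⟩

lemma exists_list_prod_eq_factorProd (v : ι → ℕ) :
    ∃ l : List M, (∀ x ∈ l, x ∈ Set.range g) ∧ l.length = factorLength v ∧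
      l.prod = factorProd g v := by
  suffices ∀ s : Finset ι, ∃ l : List M, (∀ x ∈ l, x ∈ Set.range g) ∧
      l.length = ∑ i ∈ s, v i ∧ l.prod = ∏ i ∈ s, g i ^ v i from this Finset.univ
  intro s
  induction s using Finset.induction with
  | empty => exact ⟨[], by simp⟩
  | @insert i s hi ih =>
    obtain ⟨l, hl, hlen, hprod⟩ := ih
    refine ⟨List.replicate (v i) (g i) ++ l, ?_, by simp [hlen, hi], by simp [hprod, hi]⟩
    rintro x hx
    rcases List.mem_append.mp hx with hx | hx
    · exact ⟨i, (List.eq_of_mem_replicate hx).symm⟩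
    · exact hl x hx

end FactorVectors

section Relations

variable {ι M : Type*} [Fintype ι] [CancelCommMonoid M] (g : ι → M)

def factorRelations : AddSubmonoid ((ι → ℕ) × (ι → ℕ)) where
  carrier := {p | factorProd g p.1 = factorProd g p.2}
  add_mem' {p q} hp hq := by
    change factorProd g (p.1 + q.1) = factorProd g (p.2 + q.2)
    rw [factorProd_add, factorProd_add, hp, hq]
  zero_mem' := rfl

lemma mem_factorRelations {p : (ι → ℕ) × (ι → ℕ)} :
    p ∈ factorRelations g ↔ factorProd g p.1 = factorProd g p.2 :=
  Iff.rfl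

lemma diag_mem_factorRelations (v : ι → ℕ) : (v, v) ∈ factorRelations g := rfl

lemma tsub_mem_factorRelations {p q : (ι → ℕ) × (ι → ℕ)} (hp : p ∈ factorRelations g)
    (hq : q ∈ factorRelations g) (hqp : q ≤ p) : p - q ∈ factorRelations g := by
  rw [mem_factorRelations] at hp hq ⊢
  apply mul_left_cancel (a := factorProd g q.1)
  nth_rw 2 [hq]
  rw [← factorProd_add, ← factorProd_add, Prod.fst_sub, Prod.snd_sub,
    add_tsub_cancel_of_le hqp.1, add_tsub_cancel_of_le hqp.2, hp]

def minFactorRelations : Set ((ι → ℕ) × (ι → ℕ)) :=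
  {p | Minimal (fun q => q ∈ factorRelations g ∧ q ≠ 0) p}

lemma minFactorRelations_subset : minFactorRelations g ⊆ factorRelations g :=
  fun _ hp => hp.1.1

lemma ne_zero_of_mem_minFactorRelations {p : (ι → ℕ) × (ι → ℕ)} (hp : p ∈ minFactorRelations g) :
    p ≠ 0 :=
  hp.1.2

lemma minFactorRelations_finite : (minFactorRelations g).Finite :=
  WellQuasiOrderedLE.finite_of_isAntichain (setOfPred_minimal_antichain _)

lemma exists_mem_minFactorRelations_le {p : (ι → ℕ) × (ι → ℕ)} (hp : p ∈ factorRelations g)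
    (h0 : p ≠ 0) : ∃ q ∈ minFactorRelations g, q ≤ p := by
  obtain ⟨q, hqp, hq⟩ := exists_minimal_le_of_wellFoundedLT
    (fun q => q ∈ factorRelations g ∧ q ≠ 0) p ⟨hp, h0⟩
  exact ⟨q, hq, hqp⟩

lemma closure_minFactorRelations :
    AddSubmonoid.closure (minFactorRelations g) = factorRelations g := by
  refine le_antisymm (AddSubmonoid.closure_le.mpr (minFactorRelations_subset g)) fun p hp => ?_
  induction p using WellFoundedLT.induction with
  | ind p ih =>
    rcases eq_or_ne p 0 with rfl | h0
    · exact zero_mem _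
    obtain ⟨q, hq, hqp⟩ := exists_mem_minFactorRelations_le g hp h0
    have hlt : p - q < p := by
      refine tsub_le_self.lt_of_ne fun h => ne_zero_of_mem_minFactorRelations g hq ?_
      simpa [h] using add_tsub_cancel_of_le hqp
    rw [← add_tsub_cancel_of_le hqp]
    exact add_mem (AddSubmonoid.subset_closure hq)
      (ih _ hlt (tsub_mem_factorRelations g hp (minFactorRelations_subset g hq) hqp))

lemma factorLength_snd_le_mul_of_mem_factorRelations {r : ℝ≥0∞}
    (h : ∀ q ∈ minFactorRelations g, (factorLength q.2 : ℝ≥0∞) ≤ r * factorLength q.1)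
    {p : (ι → ℕ) × (ι → ℕ)} (hp : p ∈ factorRelations g) :
    (factorLength p.2 : ℝ≥0∞) ≤ r * factorLength p.1 := by
  rw [← closure_minFactorRelations] at hp
  induction hp using AddSubmonoid.closure_induction with
  | mem q hq => exact h q hq
  | zero => simp
  | add p q _ _ hp hq => simpa [mul_add] using add_le_add hp hq

lemma eq_one_of_minFactorRelations_eq_empty (hsurj : Function.Surjective (factorProd g))
    (hE : minFactorRelations g = ∅) (a : M) : a = 1 := by
  obtain ⟨v, rfl⟩ := hsurj a
  have hv := diag_mem_factorRelations g v
  rw [← closure_minFactorRelations, hE, AddSubmonoid.closure_empty, AddSubmonoid.mem_bot,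
    Prod.mk_eq_zero] at hv
  simp [hv.1]

end Relations

section NonunitGenerators

variable {ι M : Type*} [Fintype ι] [CancelCommMonoid M] {g : ι → M}

lemma eq_zero_of_factorProd_eq_one (hg : ∀ i, ¬IsUnit (g i)) {v : ι → ℕ}
    (h : factorProd g v = 1) : v = 0 := by
  funext i
  by_contra hi
  refine hg i (isUnit_of_dvd_one ?_)
  calc g i ∣ g i ^ v i := dvd_pow_self _ hi
    _ ∣ factorProd g v := Finset.dvd_prod_of_mem _ (Finset.mem_univ i)
    _ = 1 := h

lemma fst_ne_zero_of_mem_minFactorRelations (hg : ∀ i, ¬IsUnit (g i))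
    {p : (ι → ℕ) × (ι → ℕ)} (hp : p ∈ minFactorRelations g) : p.1 ≠ 0 := by
  intro h1
  have h2 : p.2 = 0 := eq_zero_of_factorProd_eq_one hg <| by
    rw [← (minFactorRelations_subset g hp : factorProd g p.1 = _), h1, factorProd_zero]
  exact ne_zero_of_mem_minFactorRelations g hp (Prod.ext h1 h2)

/-- Fibres are antichains: `v ≤ w` in one fibre forces `factorProd g (w - v) = 1` by
cancellation. -/
lemma setOf_factorProd_eq_finite (hg : ∀ i, ¬IsUnit (g i)) (a : M) :
    {v | factorProd g v = a}.Finite := by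
  refine WellQuasiOrderedLE.finite_of_isAntichain fun v hv w hw hne hvw => hne ?_
  have h : factorProd g (w - v) = 1 := by
    apply mul_left_cancel (a := factorProd g v)
    rw [← factorProd_add, add_tsub_cancel_of_le hvw, mul_one, hv, hw]
  exact le_antisymm hvw (tsub_eq_zero_iff_le.mp (eq_zero_of_factorProd_eq_one hg h))

variable (g) in
noncomputable def maxFactorLength (a : M) : ℕ := sSup (factorLength '' {v | factorProd g v = a})

lemma factorLength_le_maxFactorLength (hg : ∀ i, ¬IsUnit (g i)) {v : ι → ℕ} :
    factorLength v ≤ maxFactorLength g (factorProd g v) :=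
  le_csSup ((setOf_factorProd_eq_finite hg _).image _).bddAbove ⟨v, rfl, rfl⟩

lemma maxFactorLength_lt_mul (hg : ∀ i, ¬IsUnit (g i)) (hsurj : Function.Surjective (factorProd g))
    (b c : M) (hc : c ≠ 1) : maxFactorLength g b < maxFactorLength g (b * c) := by
  obtain ⟨v, hv, hvmax⟩ : maxFactorLength g b ∈ factorLength '' {v | factorProd g v = b} :=
    Nat.sSup_mem (Set.image_nonempty.mpr (hsurj b))
      ((setOf_factorProd_eq_finite hg b).image _).bddAbove
  obtain ⟨w, rfl⟩ := hsurj c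
  have hw : factorLength w ≠ 0 := fun h => hc (by simp [factorLength_eq_zero_iff.mp h])
  have := factorLength_le_maxFactorLength hg (v := v + w)
  rw [factorLength_add, factorProd_add, hv, hvmax] at this
  omega

lemma atomic_of_factorProd_surjective (hg : ∀ i, ¬IsUnit (g i))
    (hsurj : Function.Surjective (factorProd g)) : Atomic M := by
  intro a
  induction h : maxFactorLength g a using Nat.strong_induction_on generalizing a with
  | _ n ih =>
    intro ha
    by_cases hirr : Irreducible a
    · exact ⟨[a], by simpa using hirr, by simp⟩
    obtain ⟨b, c, rfl, hb, hc⟩ : ∃ b c, a = b * c ∧ ¬IsUnit b ∧ ¬IsUnit c := by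
      simpa [irreducible_iff, ha] using hirr
    have hbc := maxFactorLength_lt_mul hg hsurj b c (by rintro rfl; exact hc isUnit_one)
    have hcb := maxFactorLength_lt_mul hg hsurj c b (by rintro rfl; exact hb isUnit_one)
    rw [mul_comm, h] at hcb
    rw [h] at hbc
    obtain ⟨lb, hlb, rfl⟩ := ih _ hbc b rfl hb
    obtain ⟨lc, hlc, rfl⟩ := ih _ hcb c rfl hc
    exact ⟨lb ++ lc, by simpa [or_imp, forall_and] using ⟨hlb, hlc⟩, List.prod_append⟩

end NonunitGenerators

section Reduced

variable {M : Type*} [CancelCommMonoid M]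

lemma exists_finset_factorProd_surjective (hred : ∀ u : M, IsUnit u → u = 1) (hfg : Monoid.FG M) :
    ∃ s : Finset M, (∀ x : s, ¬IsUnit (x : M)) ∧
      Function.Surjective (factorProd ((↑) : s → M)) := by
  obtain ⟨S, hS⟩ := hfg
  refine ⟨S.erase 1, fun x hu => (Finset.mem_erase.mp x.2).1 (hred x hu), fun a => ?_⟩
  have ha : a ∈ Submonoid.closure (S : Set M) := hS ▸ Submonoid.mem_top a
  induction ha using Submonoid.closure_induction with
  | mem x hx =>
    by_cases h1 : x = 1
    · exact ⟨0, by simp [h1]⟩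
    · exact ⟨Pi.single ⟨x, Finset.mem_erase.mpr ⟨h1, hx⟩⟩ 1, factorProd_single _ _⟩
  | one => exact ⟨0, factorProd_zero _⟩
  | mul x y _ _ hx hy =>
    obtain ⟨v, rfl⟩ := hx
    obtain ⟨w, rfl⟩ := hy
    exact ⟨v + w, factorProd_add _ _ _⟩

/-- In a reduced monoid an atom cannot be split into two nontrivial factors, so it belongs to
every generating set. -/
lemma finite_setOf_irreducible (hred : ∀ u : M, IsUnit u → u = 1) (hfg : Monoid.FG M) :
    {u : M | Irreducible u}.Finite := by
  obtain ⟨S, hS⟩ := hfg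
  refine S.finite_toSet.subset fun u hu => ?_
  have hmem : u ∈ Submonoid.closure (S : Set M) := hS ▸ Submonoid.mem_top u
  induction hmem using Submonoid.closure_induction with
  | mem x hx => exact hx
  | one => exact absurd hu not_irreducible_one
  | mul x y _ _ hx hy =>
    rcases hu.isUnit_or_isUnit rfl with h | h
    · rw [hred x h, one_mul] at hu ⊢
      exact hy hu
    · rw [hred y h, mul_one] at hu ⊢
      exact hx hu

end Reduced

lemma setElasticity_le {L : Set ℕ} {r : ℝ≥0∞} (h1 : 1 ≤ r)
    (h : ∀ m ∈ L, (m : ℝ≥0∞) ≤ r * (sInf L : ℕ)) : setElasticity L ≤ r := by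
  rw [setElasticity]
  split_ifs
  · exact h1
  · exact ENNReal.div_le_of_le_mul (iSup₂_le h)

lemma div_le_setElasticity {L : Set ℕ} {k l : ℕ} (hk : k ∈ L) (hl : l ∈ L) (hk0 : k ≠ 0) :
    (l : ℝ≥0∞) / k ≤ setElasticity L := by
  have hL : L ≠ {0} := by
    rintro rfl
    exact hk0 hk
  rw [setElasticity, if_neg hL]
  exact ENNReal.div_le_div (le_biSup (fun n : ℕ => (n : ℝ≥0∞)) hl)
    (Nat.cast_le.mpr (Nat.sInf_le hk))

lemma not_isUnit_of_range_eq_setOf_irreducible {ι M : Type*} [Monoid M] {g : ι → M}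
    (hatom : Set.range g = {u | Irreducible u}) (i : ι) : ¬IsUnit (g i) :=
  (hatom.le ⟨i, rfl⟩ : Irreducible (g i)).not_isUnit

section Atoms

variable {ι M : Type*} [Fintype ι] [CancelCommMonoid M] {g : ι → M}

lemma factorProd_surjective_of_atomic (hred : ∀ u : M, IsUnit u → u = 1) (hatomic : Atomic M)
    (hatom : Set.range g = {u | Irreducible u}) : Function.Surjective (factorProd g) := by
  intro a
  by_cases ha : IsUnit a
  · exact ⟨0, by simp [hred a ha]⟩
  obtain ⟨l, hl, rfl⟩ := hatomic a ha
  obtain ⟨v, hv, -⟩ := exists_factorProd_eq_list_prod g fun x hx => hatom.ge (hl x hx)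
  exact ⟨v, hv⟩

lemma exists_list_irreducible_iff (hatom : Set.range g = {u | Irreducible u}) {a : M} {k : ℕ} :
    (∃ l : List M, l.length = k ∧ (∀ x ∈ l, Irreducible x) ∧ l.prod = a) ↔
      ∃ v, factorProd g v = a ∧ factorLength v = k := by
  constructor
  · rintro ⟨l, rfl, hl, rfl⟩
    exact exists_factorProd_eq_list_prod g fun x hx => hatom.ge (hl x hx)
  · rintro ⟨v, rfl, rfl⟩
    obtain ⟨l, hl, hlen, hprod⟩ := exists_list_prod_eq_factorProd g v
    exact ⟨l, hlen, fun x hx => hatom.le (hl x hx), hprod⟩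

lemma lengths_eq_image (hred : ∀ u : M, IsUnit u → u = 1)
    (hatom : Set.range g = {u | Irreducible u}) (a : M) :
    lengths a = factorLength '' {v | factorProd g v = a} := by
  rw [lengths]
  split_ifs with ha
  · obtain rfl := hred a ha
    ext k
    constructor
    · rintro rfl
      exact ⟨0, factorProd_zero g, factorLength_zero⟩
    · rintro ⟨v, hv, rfl⟩
      simp [eq_zero_of_factorProd_eq_one (not_isUnit_of_range_eq_setOf_irreducible hatom) hv]
  · ext k
    exact exists_list_irreducible_iff hatom

lemma factorLength_mem_lengths (hred : ∀ u : M, IsUnit u → u = 1)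
    (hatom : Set.range g = {u | Irreducible u}) (v : ι → ℕ) :
    factorLength v ∈ lengths (factorProd g v) := by
  rw [lengths_eq_image hred hatom]
  exact ⟨v, rfl, rfl⟩

lemma mem_lengthUnion_iff_s12 (hatom : Set.range g = {u | Irreducible u}) {k ℓ : ℕ} :
    ℓ ∈ lengthUnion M k ↔
      ∃ p ∈ factorRelations g, factorLength p.1 = k ∧ factorLength p.2 = ℓ := by
  constructor
  · rintro ⟨l₁, l₂, h₁, h₂, hl₁, hl₂, h⟩
    obtain ⟨v, hv, rfl⟩ := (exists_list_irreducible_iff hatom).mp ⟨l₁, h₁, hl₁, rfl⟩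
    obtain ⟨w, hw, rfl⟩ := (exists_list_irreducible_iff hatom).mp ⟨l₂, h₂, hl₂, rfl⟩
    exact ⟨(v, w), hv.trans (h.trans hw.symm), rfl, rfl⟩
  · rintro ⟨⟨v, w⟩, hp, rfl, rfl⟩
    obtain ⟨l₁, h₁, hl₁, hp₁⟩ := (exists_list_irreducible_iff hatom).mpr ⟨v, rfl, rfl⟩
    obtain ⟨l₂, h₂, hl₂, hp₂⟩ := (exists_list_irreducible_iff hatom).mpr ⟨w, rfl, rfl⟩
    exact ⟨l₁, l₂, h₁, h₂, hl₁, hl₂, hp₁.trans (hp.trans hp₂.symm)⟩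

end Atoms

section Invariants

variable {ι M : Type*} [Fintype ι] [CancelCommMonoid M] {g : ι → M}

/-- Rewriting `b + p.1` into `b + p.2` one generating relation at a time changes the length by at
most `C` per step, so some intermediate factorization has its length in `(k, k + C]`. -/
lemma exists_factorLength_mem_Ioc {S : Set ((ι → ℕ) × (ι → ℕ))} (hS : S ⊆ factorRelations g)
    {C : ℕ} (hC : ∀ q ∈ S, factorLength q.2 ≤ C) {p : (ι → ℕ) × (ι → ℕ)}
    (hp : p ∈ AddSubmonoid.closure S) (b : ι → ℕ) {k : ℕ} (h₁ : factorLength (b + p.1) ≤ k)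
    (h₂ : k < factorLength (b + p.2)) :
    ∃ u, factorProd g u = factorProd g (b + p.1) ∧ k < factorLength u ∧ factorLength u ≤ k + C := by
  induction hp using AddSubmonoid.closure_induction generalizing b with
  | mem q hq =>
    refine ⟨b + q.2, by rw [factorProd_add, factorProd_add, (hS hq : factorProd g q.1 = _)], h₂, ?_⟩
    have := hC q hq
    simp only [factorLength_add] at h₁ ⊢
    omega
  | zero => exact absurd h₂ (by simpa using h₁)
  | add p q hp hq ihp ihq =>
    have hpS : factorProd g p.1 = factorProd g p.2 := AddSubmonoid.closure_le.mpr hS hp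
    simp only [Prod.fst_add, Prod.snd_add, factorLength_add] at h₁ h₂ ihp ihq
    by_cases hk : k < factorLength (b + p.2 + q.1)
    · obtain ⟨u, hu, hku, huC⟩ := ihp (b + q.1) (by simp only [factorLength_add]; omega)
        (by simp only [factorLength_add] at hk ⊢; omega)
      refine ⟨u, hu.trans ?_, hku, huC⟩
      simp only [Prod.fst_add, factorProd_add]
      ac_rfl
    · obtain ⟨u, hu, hku, huC⟩ := ihq (b + p.2) (by simp only [factorLength_add] at hk ⊢; omega)
        (by simp only [factorLength_add]; omega)
      refine ⟨u, hu.trans ?_, hku, huC⟩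
      simp only [Prod.fst_add, factorProd_add, hpS]
      ac_rfl

variable (hatom : Set.range g = {u | Irreducible u})
include hatom

/-- Removing a minimal relation `q` from a relation between factorizations of lengths `k` and `ℓ`,
and padding the first side back up to length `k - 1` with copies of one atom on both sides,
loses at most `factorLength q.2 ≤ C` on the second side. -/
lemma exists_mem_lengthUnion_pred_le_add {C : ℕ}
    (hC : ∀ q ∈ minFactorRelations g, factorLength q.2 ≤ C) {k ℓ : ℕ}
    (hℓ : ℓ ∈ lengthUnion M k) : ∃ ℓ' ∈ lengthUnion M (k - 1), ℓ ≤ ℓ' + C := by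
  obtain ⟨p, hp, rfl, rfl⟩ := (mem_lengthUnion_iff_s12 hatom).mp hℓ
  rcases eq_or_ne p 0 with rfl | hp0
  · exact ⟨0, (mem_lengthUnion_iff_s12 hatom).mpr ⟨0, zero_mem _, by simp, by simp⟩, by simp⟩
  obtain ⟨q, hq, hqp⟩ := exists_mem_minFactorRelations_le g hp hp0
  have hq1 := fst_ne_zero_of_mem_minFactorRelations
    (not_isUnit_of_range_eq_setOf_irreducible hatom) hq
  obtain ⟨i, -⟩ := Function.ne_iff.mp hq1
  set c : ι → ℕ := (factorLength q.1 - 1) • Pi.single i 1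
  have hmem : p - q + (c, c) ∈ factorRelations g :=
    add_mem (tsub_mem_factorRelations g hp (minFactorRelations_subset g hq) hqp)
      (diag_mem_factorRelations g c)
  refine ⟨_, (mem_lengthUnion_iff_s12 hatom).mpr ⟨_, hmem, ?_, rfl⟩, ?_⟩ <;>
  · have h₁ : 1 ≤ factorLength q.1 :=
      Nat.one_le_iff_ne_zero.mpr (factorLength_eq_zero_iff.not.mpr hq1)
    have h₂ := factorLength_mono hqp.1
    have h₃ := factorLength_mono hqp.2
    have h₄ := hC q hq
    simp only [Prod.fst_add, Prod.snd_add, Prod.fst_sub, Prod.snd_sub, factorLength_add,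
      factorLength_tsub hqp.1, factorLength_tsub hqp.2, c, factorLength_nsmul, factorLength_single]
    omega

lemma rhoK_le_rhoK_pred_add {C : ℕ} (hC : ∀ q ∈ minFactorRelations g, factorLength q.2 ≤ C)
    (k : ℕ) : rhoK M k ≤ rhoK M (k - 1) + C := by
  refine iSup₂_le fun ℓ hℓ => ?_
  obtain ⟨ℓ', hℓ', hle⟩ := exists_mem_lengthUnion_pred_le_add hatom hC hℓ
  calc (ℓ : ℝ≥0∞) ≤ ℓ' + C := by exact_mod_cast hle
    _ ≤ rhoK M (k - 1) + C := by
      gcongr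
      exact le_biSup (fun n : ℕ => (n : ℝ≥0∞)) hℓ'

variable (hred : ∀ u : M, IsUnit u → u = 1)
include hred

lemma le_of_mem_distances_lengths {C : ℕ} (hC : ∀ q ∈ minFactorRelations g, factorLength q.2 ≤ C)
    {a : M} {d : ℕ} (hd : d ∈ distances (lengths a)) : d ≤ C := by
  obtain ⟨hd0, k, hk, hkd, hgap⟩ := hd
  rw [lengths_eq_image hred hatom] at hk hkd hgap
  obtain ⟨v, rfl, rfl⟩ := hk
  obtain ⟨w, hw, hwd⟩ := hkd
  have hvw : (v, w) ∈ AddSubmonoid.closure (minFactorRelations g) := by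
    rw [closure_minFactorRelations]
    exact hw.symm
  obtain ⟨u, hu, hku, huC⟩ := exists_factorLength_mem_Ioc (minFactorRelations_subset g) hC hvw 0
    (k := factorLength v) (by simp) (by simp only [zero_add]; omega)
  by_contra! hCd
  rcases hgap _ ⟨u, by simpa using hu, rfl⟩ hku.le (by omega) with h | h <;> omega

lemma deltaH_subset_Iic {C : ℕ} (hC : ∀ q ∈ minFactorRelations g, factorLength q.2 ≤ C) :
    DeltaH M ⊆ Set.Iic C := by
  intro d hd
  obtain ⟨a, ha⟩ := Set.mem_iUnion.mp hd
  exact le_of_mem_distances_lengths hatom hred hC ha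

lemma lengths_finite (a : M) : (lengths a).Finite := by
  rw [lengths_eq_image hred hatom]
  exact (setOf_factorProd_eq_finite (not_isUnit_of_range_eq_setOf_irreducible hatom) a).image _

variable (hsurj : Function.Surjective (factorProd g))
include hsurj

lemma lengths_nonempty (a : M) : (lengths a).Nonempty := by
  rw [lengths_eq_image hred hatom]
  exact Set.image_nonempty.mpr (hsurj a)

lemma setElasticity_lengths_le {r : ℝ≥0∞} (h1 : 1 ≤ r)
    (hr : ∀ p ∈ factorRelations g, (factorLength p.2 : ℝ≥0∞) ≤ r * factorLength p.1) (a : M) :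
    setElasticity (lengths a) ≤ r := by
  refine setElasticity_le h1 fun m hm => ?_
  have hmin := Nat.sInf_mem (lengths_nonempty hatom hred hsurj a)
  rw [lengths_eq_image hred hatom] at hm hmin ⊢
  obtain ⟨w, hw, rfl⟩ := hm
  obtain ⟨v, hv, hvmin⟩ := hmin
  rw [← hvmin]
  exact hr (v, w) (hv.trans hw.symm)

/-- The witness is `factorProd g p.1` for a minimal relation `p` maximizing
`factorLength p.2 / factorLength p.1`. -/
lemma exists_forall_setElasticity_lengths_le :
    ∃ a : M, setElasticity (lengths a) < ⊤ ∧
      ∀ b : M, setElasticity (lengths b) ≤ setElasticity (lengths a) := by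
  rcases (minFactorRelations g).eq_empty_or_nonempty with hE | hE
  · refine ⟨1, by simp [setElasticity, lengths], fun b => ?_⟩
    rw [eq_one_of_minFactorRelations_eq_empty g hsurj hE b]
  obtain ⟨p, hp, hpmax⟩ := Set.exists_max_image _
    (fun q => (factorLength q.2 : ℝ≥0∞) / factorLength q.1) (minFactorRelations_finite g) hE
  have hlen_ne_zero : ∀ q ∈ minFactorRelations g, factorLength q.1 ≠ 0 := fun q hq =>
    factorLength_eq_zero_iff.not.mpr
      (fst_ne_zero_of_mem_minFactorRelations (not_isUnit_of_range_eq_setOf_irreducible hatom) hq)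
  set r := (factorLength p.2 : ℝ≥0∞) / factorLength p.1
  have hr : ∀ q ∈ factorRelations g, (factorLength q.2 : ℝ≥0∞) ≤ r * factorLength q.1 := by
    refine fun q hq => factorLength_snd_le_mul_of_mem_factorRelations g (fun q hq => ?_) hq
    rw [← ENNReal.div_le_iff (by exact_mod_cast hlen_ne_zero q hq) (ENNReal.natCast_ne_top _)]
    exact hpmax q hq
  have h1 : 1 ≤ r := by
    rw [← ENNReal.div_self (a := factorLength p.1) (by exact_mod_cast hlen_ne_zero p hp)
      (ENNReal.natCast_ne_top _)]
    exact ENNReal.div_le_of_le_mul (hr _ (diag_mem_factorRelations g p.1))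
  have hra : r ≤ setElasticity (lengths (factorProd g p.1)) :=
    div_le_setElasticity (factorLength_mem_lengths hred hatom p.1)
      ((minFactorRelations_subset g hp : factorProd g p.1 = _) ▸
        factorLength_mem_lengths hred hatom p.2) (hlen_ne_zero p hp)
  refine ⟨factorProd g p.1, ?_,
    fun b => (setElasticity_lengths_le hatom hred hsurj h1 hr b).trans hra⟩
  exact (setElasticity_lengths_le hatom hred hsurj h1 hr _).trans_lt
    (ENNReal.div_lt_top (ENNReal.natCast_ne_top _) (by exact_mod_cast hlen_ne_zero p hp))

end Invariants

theorem stmt12 {M : Type*} [CancelCommMonoid M]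
    (hred : ∀ u : M, IsUnit u → u = 1) (hfg : Monoid.FG M) :
    (∀ a : M, (lengths a).Finite ∧ (lengths a).Nonempty) ∧
    (DeltaH M).Finite ∧
    elasticity M < ⊤ ∧
    (∃ a : M, setElasticity (lengths a) = elasticity M) ∧
    ∃ Mb : ℕ, ∀ k : ℕ, 2 ≤ k → rhoK M k ≤ rhoK M (k - 1) + (Mb : ℝ≥0∞) := by
  obtain ⟨s, hs, hs_surj⟩ := exists_finset_factorProd_surjective hred hfg
  have hatomic : Atomic M := atomic_of_factorProd_surjective hs hs_surj
  set A := (finite_setOf_irreducible hred hfg).toFinset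
  have hatom : Set.range ((↑) : A → M) = {u | Irreducible u} := by
    simp [A]
  have hsurj := factorProd_surjective_of_atomic hred hatomic hatom
  obtain ⟨C, hC⟩ : ∃ C, ∀ q ∈ minFactorRelations ((↑) : A → M), factorLength q.2 ≤ C :=
    ⟨_, fun q hq => Finset.le_sup (f := fun q => factorLength q.2)
      ((minFactorRelations_finite _).mem_toFinset.mpr hq)⟩
  obtain ⟨a, ha_top, ha_max⟩ := exists_forall_setElasticity_lengths_le hatom hred hsurj
  have hρ : elasticity M = setElasticity (lengths a) :=
    le_antisymm (iSup_le ha_max) (le_iSup (fun b => setElasticity (lengths b)) a)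
  exact ⟨fun b => ⟨lengths_finite hatom hred b, lengths_nonempty hatom hred hsurj b⟩,
    (Set.finite_Iic C).subset (deltaH_subset_Iic hatom hred hC), hρ ▸ ha_top, ⟨a, hρ.symm⟩,
    C, fun k _ => rhoK_le_rhoK_pred_add hatom hC k⟩
end
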